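/- Let r ≥ 2 and n ≥ 1, let T be a finite set and let x, y be two distinct elements not in T. Then the two composite maps rConf(T ∪ {x}, ℝⁿ) → rConf(T ∪ {y}, ℝⁿ) — namely, restricting to T and then stabilizing by y, versus stabilizing by y (to rConf(T ∪ {x, y}, ℝⁿ)) and then restricting to T ∪ {y} — are homotopic as continuous maps. -/
import Mathlib


/-- An `r`-configuration: a tuple of points with no `r`-element subset of the index set
on which the function is constant. -/
def IsRConf (r : ℕ) {n : ℕ} {β : Type*} (f : β → Fin n → ℝ) : Prop :=
  ¬∃ B : Finset β, B.card = r ∧ ∀ i ∈ B, ∀ j ∈ B, f i = f j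

/-- The no-`r`-equal configuration space of points of `ℝⁿ` labelled by a finite set `T`. -/
abbrev RConf {α : Type*} (r n : ℕ) (T : Finset α) : Type _ :=
  {f : ↥T → Fin n → ℝ // IsRConf r f}

/-- Extend a configuration labelled by `T` to one labelled by `insert x T`, placing the new
point at `(M + 1, 0, …, 0)` where `M` is the maximum of the first coordinates of the
existing points (`M = 0` if `T = ∅`). -/
noncomputable def stabExt {α : Type*} [DecidableEq α] (n : ℕ) (T : Finset α) (x : α)
    (f : ↥T → Fin n → ℝ) : ↥(insert x T) → Fin n → ℝ :=
  fun t => if h : (t : α) ∈ T then f ⟨t, h⟩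
    else fun i => if (i : ℕ) = 0 then (⨆ s : ↥T, f s i) + 1 else 0

section Aux

variable {α : Type*} [DecidableEq α]

/-- Finite suprema of reals depend continuously on the function. -/
lemma continuous_ciSup_finite {ι : Type*} [Fintype ι] :
    Continuous fun g : ι → ℝ => ⨆ i, g i := by
  cases isEmpty_or_nonempty ι with
  | inl h =>
    have he : (fun g : ι → ℝ => ⨆ i, g i) = fun _ => sSup ∅ := by
      funext g
      rw [iSup, Set.range_eq_empty]
    rw [he]
    exact continuous_const
  | inr h =>
    have he : (fun g : ι → ℝ => ⨆ i, g i)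
        = fun g => Finset.univ.sup' Finset.univ_nonempty g := by
      funext g
      rw [Finset.sup'_univ_eq_ciSup]
    rw [he]
    exact Continuous.finset_sup'_apply _ fun i _ => continuous_apply i

/-- The straight-line interpolation between the two stabilization maps. -/
noncomputable def Gmap (n : ℕ) (T : Finset α) (x y : α) (s : ℝ)
    (f : ↥(insert x T) → Fin n → ℝ) : ↥(insert y T) → Fin n → ℝ :=
  fun t => if h : (t : α) ∈ T then f ⟨t, Finset.mem_insert_of_mem h⟩
    else fun i => if (i : ℕ) = 0 then
      ((1 - s) * (⨆ u : ↥T, f ⟨u, Finset.mem_insert_of_mem u.2⟩ i)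
        + s * (⨆ u : ↥(insert x T), f u i)) + 1
    else 0

lemma Gmap_mem (r n : ℕ) (hr : 2 ≤ r) (hn : 1 ≤ n) (T : Finset α) (x y : α)
    (hxy : x ≠ y) (hx : x ∉ T) (hy : y ∉ T) (s : ℝ) (hs0 : 0 ≤ s) (hs1 : s ≤ 1)
    (f : RConf r n (insert x T)) : IsRConf r (Gmap n T x y s f.1) := by
  rintro ⟨B, hcard, hconst⟩
  by_cases hyB : (⟨y, Finset.mem_insert_self y T⟩ : ↥(insert y T)) ∈ B
  · -- the new point equals an old one: contradiction on the first coordinate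
    obtain ⟨t, htB, htne⟩ :=
      Finset.exists_mem_ne (by omega : 1 < B.card)
        (⟨y, Finset.mem_insert_self y T⟩ : ↥(insert y T))
    have htT : (t : α) ∈ T := by
      have h2 := t.2
      rw [Finset.mem_insert] at h2
      rcases h2 with h2 | h2
      · exact absurd (Subtype.ext h2) htne
      · exact h2
    have heq := congrFun (hconst t htB _ hyB) ⟨0, hn⟩
    set i0 : Fin n := ⟨0, hn⟩ with hi0
    have hL : Gmap n T x y s f.1 t i0 = f.1 ⟨t, Finset.mem_insert_of_mem htT⟩ i0 := by
      unfold Gmap; rw [dif_pos htT]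
    have hR : Gmap n T x y s f.1 ⟨y, Finset.mem_insert_self y T⟩ i0 =
        ((1 - s) * (⨆ u : ↥T, f.1 ⟨u, Finset.mem_insert_of_mem u.2⟩ i0)
          + s * (⨆ u : ↥(insert x T), f.1 u i0)) + 1 := by
      unfold Gmap; rw [dif_neg hy, if_pos rfl]
    rw [hL, hR] at heq
    set c := f.1 ⟨t, Finset.mem_insert_of_mem htT⟩ i0 with hc
    have hA : c ≤ ⨆ u : ↥T, f.1 ⟨u, Finset.mem_insert_of_mem u.2⟩ i0 :=
      le_ciSup (f := fun u : ↥T => f.1 ⟨u, Finset.mem_insert_of_mem u.2⟩ i0)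
        (Set.Finite.bddAbove (Set.finite_range _)) (⟨t, htT⟩ : ↥T)
    have hB : c ≤ ⨆ u : ↥(insert x T), f.1 u i0 :=
      le_ciSup (f := fun u : ↥(insert x T) => f.1 u i0)
        (Set.Finite.bddAbove (Set.finite_range _))
        (⟨(t : α), Finset.mem_insert_of_mem htT⟩ : ↥(insert x T))
    nlinarith [mul_le_mul_of_nonneg_left hA (by linarith : (0:ℝ) ≤ 1 - s),
      mul_le_mul_of_nonneg_left hB hs0]
  · -- all points of `B` lie in `T`: contradicts `f` being a configuration
    have hBT : ∀ t ∈ B, (t : ↥(insert y T)).1 ∈ T := by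
      intro t htB
      have h2 := t.2
      rw [Finset.mem_insert] at h2
      rcases h2 with h2 | h2
      · have heq : t = ⟨y, Finset.mem_insert_self y T⟩ := Subtype.ext h2
        exact absurd (heq ▸ htB) hyB
      · exact h2
    set ι : ↥(insert y T) → ↥(insert x T) := fun t =>
      if h : (t : α) ∈ T then ⟨t, Finset.mem_insert_of_mem h⟩
      else ⟨x, Finset.mem_insert_self x T⟩ with hι
    have hval : ∀ t ∈ B, f.1 (ι t) = Gmap n T x y s f.1 t := by
      intro t htB
      have hT := hBT t htB
      simp only [hι, dif_pos hT]
      unfold Gmap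
      rw [dif_pos hT]
    refine f.2 ⟨B.image ι, ?_, ?_⟩
    · rw [Finset.card_image_of_injOn, hcard]
      intro a ha b hb hab
      have hTa := hBT a ha
      have hTb := hBT b hb
      simp only [hι, dif_pos hTa, dif_pos hTb, Subtype.mk.injEq] at hab
      exact Subtype.ext hab
    · intro i hi j hj
      obtain ⟨a, ha, rfl⟩ := Finset.mem_image.1 hi
      obtain ⟨b, hb, rfl⟩ := Finset.mem_image.1 hj
      rw [hval a ha, hval b hb]
      exact hconst a ha b hb

lemma Gmap_zero (n : ℕ) (T : Finset α) (x y : α)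
    (f : ↥(insert x T) → Fin n → ℝ) (t : ↥(insert y T)) :
    Gmap n T x y 0 f t
      = stabExt n T y (fun u : ↥T => f ⟨u, Finset.mem_insert_of_mem u.2⟩) t := by
  unfold Gmap stabExt
  by_cases h : (t : α) ∈ T
  · rw [dif_pos h, dif_pos h]
  · rw [dif_neg h, dif_neg h]
    funext i
    by_cases hi : (i : ℕ) = 0
    · rw [if_pos hi, if_pos hi]; ring
    · rw [if_neg hi, if_neg hi]

lemma Gmap_one (n : ℕ) (T : Finset α) (x y : α) (hxy : x ≠ y) (hx : x ∉ T)
    (f : ↥(insert x T) → Fin n → ℝ) (t : ↥(insert y T))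
    (ht : (t : α) ∈ insert y (insert x T)) :
    Gmap n T x y 1 f t = stabExt n (insert x T) y f ⟨t, ht⟩ := by
  unfold Gmap stabExt
  by_cases h : (t : α) ∈ T
  · rw [dif_pos h, dif_pos (Finset.mem_insert_of_mem h)]
  · have h' : ((⟨(t : α), ht⟩ : ↥(insert y (insert x T))) : α) ∉ insert x T := by
      rw [Finset.mem_insert]
      push_neg
      refine ⟨?_, h⟩
      intro hxe
      have h2 := t.2
      rw [Finset.mem_insert] at h2
      rcases h2 with h2 | h2
      · exact hxy (hxe ▸ h2)
      · exact h (hxe ▸ h2)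
    rw [dif_neg h, dif_neg h']
    funext i
    by_cases hi : (i : ℕ) = 0
    · rw [if_pos hi, if_pos hi]; ring
    · rw [if_neg hi, if_neg hi]

lemma continuous_Gmap (r n : ℕ) (T : Finset α) (x y : α) :
    Continuous fun p : ℝ × (RConf r n (insert x T)) => Gmap n T x y p.1 p.2.1 := by
  apply continuous_pi
  intro t
  apply continuous_pi
  intro i
  unfold Gmap
  by_cases h : (t : α) ∈ T
  · simp only [dif_pos h]
    exact (continuous_apply i).comp
      ((continuous_apply _).comp (continuous_subtype_val.comp continuous_snd))
  · simp only [dif_neg h]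
    by_cases hi : (i : ℕ) = 0
    · simp only [if_pos hi]
      have hA : Continuous fun p : ℝ × (RConf r n (insert x T)) =>
          ⨆ u : ↥T, p.2.1 ⟨u, Finset.mem_insert_of_mem u.2⟩ i := by
        apply continuous_ciSup_finite.comp
        apply continuous_pi
        intro u
        exact (continuous_apply i).comp
          ((continuous_apply _).comp (continuous_subtype_val.comp continuous_snd))
      have hB : Continuous fun p : ℝ × (RConf r n (insert x T)) =>
          ⨆ u : ↥(insert x T), p.2.1 u i := by
        apply continuous_ciSup_finite.comp
        apply continuous_pi
        intro u
        exact (continuous_apply i).comp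
          ((continuous_apply _).comp (continuous_subtype_val.comp continuous_snd))
      exact (((continuous_const.sub continuous_fst).mul hA).add
        (continuous_fst.mul hB)).add continuous_const
    · simp only [if_neg hi]
      exact continuous_const

end Aux

theorem stmt4 {α : Type*} [DecidableEq α] (r n : ℕ) (hr : 2 ≤ r) (hn : 1 ≤ n)
    (T : Finset α) (x y : α) (hxy : x ≠ y) (hx : x ∉ T) (hy : y ∉ T) :
    ∃ g₁ g₂ : C(RConf r n (insert x T), RConf r n (insert y T)),
      (∀ f : RConf r n (insert x T), ∀ t : ↥(insert y T),
        (g₁ f).1 t =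
          stabExt n T y (fun u : ↥T => f.1 ⟨u, Finset.mem_insert_of_mem u.2⟩) t) ∧
      (∀ f : RConf r n (insert x T), ∀ t : ↥(insert y T),
        (g₂ f).1 t = stabExt n (insert x T) y f.1
          ⟨t, by have := t.2; simp only [Finset.mem_insert] at this ⊢; tauto⟩) ∧
      g₁.Homotopic g₂ := by
  have hc : ∀ s : ℝ, Continuous fun f : RConf r n (insert x T) => Gmap n T x y s f.1 := by
    intro s
    exact (continuous_Gmap r n T x y).comp (continuous_const.prodMk continuous_id)
  refine ⟨⟨fun f => ⟨Gmap n T x y 0 f.1,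
      Gmap_mem r n hr hn T x y hxy hx hy 0 le_rfl zero_le_one f⟩, (hc 0).subtype_mk _⟩,
    ⟨fun f => ⟨Gmap n T x y 1 f.1,
      Gmap_mem r n hr hn T x y hxy hx hy 1 zero_le_one le_rfl f⟩, (hc 1).subtype_mk _⟩,
    ?_, ?_, ?_⟩
  · intro f t
    exact Gmap_zero n T x y f.1 t
  · intro f t
    exact Gmap_one n T x y hxy hx f.1 t _
  · refine ⟨{
      toFun := fun p => ⟨Gmap n T x y (p.1 : ℝ) p.2.1,
        Gmap_mem r n hr hn T x y hxy hx hy (p.1 : ℝ) p.1.2.1 p.1.2.2 p.2⟩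
      continuous_toFun := ?_
      map_zero_left := ?_
      map_one_left := ?_ }⟩
    · exact Continuous.subtype_mk ((continuous_Gmap r n T x y).comp
        ((continuous_subtype_val.comp continuous_fst).prodMk continuous_snd)) _
    · intro f
      exact Subtype.ext (by norm_num)
    · intro f
      exact Subtype.ext (by norm_num)
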